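/- arXiv:2206.09884 — 2 statements merged into one kernel-verified Lean document; each statement's English description precedes it below -/
import Mathlib

section
/- Let G be a finite simple graph with positive vertex weights w, let k ≥ 0 be an integer, and let F ⊆ V(G) be nonempty. Let v be a degree-1 vertex of G with unique neighbor u, and suppose F ≠ {v}. Then every maximum-weight k-secluded supertree H of F in G contains u if and only if it contains v. -/
/-!
If `u ∈ H` but `v ∉ H`, attaching the pendant vertex `v` to `H` keeps it an induced tree,
can only shrink its open neighbourhood, and strictly increases its weight, contradicting
maximality. If `v ∈ H` but `u ∉ H`, then `v` has no neighbour in the connected set `H`,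
so `H = {v}` and hence `F = {v}`.
-/

namespace Secluded

open SimpleGraph

variable {V : Type*}

/-- The open neighborhood of a vertex set `S`: vertices outside `S` with a neighbor in `S`. -/
def openNbhd (G : SimpleGraph V) (S : Set V) : Set V :=
  {v | v ∉ S ∧ ∃ u ∈ S, G.Adj v u}

/-- The graph obtained from `G` by deleting the vertices in `D`
(kept on the same vertex type; deleted vertices become isolated). -/
def gdelete (G : SimpleGraph V) (D : Set V) : SimpleGraph V where
  Adj x y := G.Adj x y ∧ x ∉ D ∧ y ∉ D
  symm := ⟨fun _ _ h => ⟨h.1.symm, h.2.2, h.2.1⟩⟩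
  loopless := ⟨fun _ h => G.irrefl h.1⟩

/-- `S` induces a tree (connected and acyclic induced subgraph) in `G`. -/
def IsInducedTree (G : SimpleGraph V) (S : Set V) : Prop :=
  (G.induce S).IsTree

/-- `S` is a `k`-secluded tree in `G`. -/
def IsSecludedTree (G : SimpleGraph V) (k : ℕ) (S : Set V) : Prop :=
  IsInducedTree G S ∧ (openNbhd G S).ncard ≤ k

/-- The set of `k`-secluded supertrees of `F` in `G`. -/
def secl (G : SimpleGraph V) (k : ℕ) (F : Set V) : Set (Set V) :=
  {S | IsSecludedTree G k S ∧ F ⊆ S}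

/-- Total weight of a vertex set. -/
noncomputable def weight (w : V → ℕ) (S : Set V) : ℕ := ∑ᶠ x ∈ S, w x

/-- The maximum-weight elements of a collection of vertex sets. -/
def maxset (w : V → ℕ) (X : Set (Set V)) : Set (Set V) :=
  {S | S ∈ X ∧ ∀ S' ∈ X, weight w S' ≤ weight w S}

/-- `S` consists of exactly one vertex from each member of `𝒳`. -/
def IsTransversal (𝒳 : Set (Set V)) (S : Set V) : Prop :=
  S ⊆ ⋃₀ 𝒳 ∧ ∀ X ∈ 𝒳, (S ∩ X).ncard = 1

/-- The vertex set of the connected component of `G − S` containing `r`. -/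
def component (G : SimpleGraph V) (S : Set V) (r : V) : Set V :=
  {x | (gdelete G S).Reachable r x}

/-- `(r, 𝒳)` is a description for `G`. -/
def IsDescription (G : SimpleGraph V) (r : V) (𝒳 : Set (Set V)) : Prop :=
  (∀ X ∈ 𝒳, r ∉ X) ∧ 𝒳.Pairwise Disjoint ∧
    ∀ S : Set V, IsTransversal 𝒳 S →
      (G.induce (component G S r)).IsAcyclic ∧ openNbhd G (component G S r) = S

/-- The induced tree (given by its vertex set `C`) is described by the description `D`. -/
def Describes (G : SimpleGraph V) (D : V × Set (Set V)) (C : Set V) : Prop :=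
  D.1 ∈ C ∧ IsTransversal D.2 (openNbhd G C)

/-- `𝒯_G(𝔛)`: the set of induced trees of `G` described by some member of `𝔛`. -/
def treesOf (G : SimpleGraph V) (𝔛 : Set (V × Set (Set V))) : Set (Set V) :=
  {C | IsInducedTree G C ∧ ∃ D ∈ 𝔛, Describes G D C}

/-- No induced tree of `G` is described by two distinct members of `𝔛`. -/
def NonRedundant (G : SimpleGraph V) (𝔛 : Set (V × Set (Set V))) : Prop :=
  ∀ C : Set V, IsInducedTree G C → ∀ D₁ ∈ 𝔛, ∀ D₂ ∈ 𝔛,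
    Describes G D₁ C → Describes G D₂ C → D₁ = D₂

/-- Degree of a vertex. -/
noncomputable def degOf (G : SimpleGraph V) (v : V) : ℕ := (G.neighborSet v).ncard


lemma _root_.SimpleGraph.Walk.IsCycle.not_mem_support_of_subsingleton_neighborSet
    {G : SimpleGraph V} {a x : V} {c : G.Walk a a} (hc : c.IsCycle)
    (hx : (G.neighborSet x).Subsingleton) : x ∉ c.support := by
  classical
  intro hxc
  -- rotated to start at `x`, the cycle leaves `x` and returns to it along two distinct neighbours
  have hc' := hc.rotate hxc
  exact hc'.snd_ne_penultimate
    (hx (Walk.adj_snd hc'.not_nil) (Walk.adj_penultimate hc'.not_nil).symm)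

lemma isAcyclic_induce_insert {G : SimpleGraph V} {S : Set V} {x : V}
    (hx : (G.neighborSet x).Subsingleton) (hS : (G.induce S).IsAcyclic) :
    (G.induce (insert x S)).IsAcyclic := by
  intro a c hc
  let f := Embedding.induce (G := G) (insert x S)
  have hfc : (c.map f.toHom).IsCycle := hc.map f.injective
  have hsupp : ∀ z ∈ (c.map f.toHom).support, z ∈ S := by
    intro z hz
    have hzx : z ∈ insert x S := by
      obtain ⟨b, -, rfl⟩ := List.mem_map.mp ((c.support_map f.toHom) ▸ hz)
      exact b.2
    have hne : z ≠ x := by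
      rintro rfl
      exact hfc.not_mem_support_of_subsingleton_neighborSet hx hz
    exact hzx.resolve_left hne
  have hlift : ((c.map f.toHom).induce S hsupp).IsCycle := by
    rwa [← Walk.isCycle_map_iff_of_injective (f := (Embedding.induce (G := G) S).toHom)
      Subtype.val_injective, Walk.map_induce]
  exact hS _ hlift

lemma isTree_induce_insert {G : SimpleGraph V} {S : Set V} {x y : V}
    (hxy : G.neighborSet x = {y}) (hy : y ∈ S) (hS : (G.induce S).IsTree) :
    (G.induce (insert x S)).IsTree := by
  have hadj : G.Adj x y := by simp [← mem_neighborSet, hxy]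
  exact ⟨connected_induce_union (s := {x}) Preconnected.of_subsingleton hS.connected.preconnected
      (Set.mem_singleton x) hy hadj,
    isAcyclic_induce_insert (hxy ▸ Set.subsingleton_singleton) hS.isAcyclic⟩

lemma openNbhd_insert {G : SimpleGraph V} {S : Set V} {x : V} (hx : G.neighborSet x ⊆ S) :
    openNbhd G (insert x S) = openNbhd G S \ {x} := by
  ext z
  simp only [openNbhd, Set.mem_ofPred_eq, Set.mem_sdiff, Set.mem_insert_iff,
    Set.mem_singleton_iff, exists_eq_or_imp, not_or]
  constructor
  · rintro ⟨⟨hzx, hzS⟩, hzx' | hz⟩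
    · exact absurd (hx hzx'.symm) hzS
    · exact ⟨⟨hzS, hz⟩, hzx⟩
  · rintro ⟨⟨hzS, hz⟩, hzx⟩
    exact ⟨⟨hzx, hzS⟩, Or.inr hz⟩

lemma insert_mem_secl {G : SimpleGraph V} {k : ℕ} {F H : Set V} {x y : V}
    (hH : H ∈ secl G k F) (hxy : G.neighborSet x = {y}) (hy : y ∈ H) :
    insert x H ∈ secl G k F := by
  obtain ⟨⟨hTree, hNbhd⟩, hFH⟩ := hH
  refine ⟨⟨isTree_induce_insert hxy hy hTree, ?_⟩, hFH.trans (Set.subset_insert x H)⟩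
  rw [openNbhd_insert (hxy ▸ Set.singleton_subset_iff.mpr hy)]
  exact (Set.ncard_sdiff_singleton_le _ x).trans hNbhd

lemma subset_singleton_of_preconnected_induce {G : SimpleGraph V} {S : Set V} {x : V}
    (hS : (G.induce S).Preconnected) (hx : x ∈ S) (hxS : ∀ y ∈ S, ¬G.Adj x y) : S ⊆ {x} := by
  intro z hz
  by_contra hzx
  obtain ⟨p⟩ := hS ⟨x, hx⟩ ⟨z, hz⟩
  have hp : ¬p.Nil := Walk.not_nil_of_ne fun h => hzx (congrArg Subtype.val h).symm
  exact hxS _ p.snd.2 (Walk.adj_snd hp)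

/-- for a degree-1 vertex `v` with unique neighbor `u` and `F ≠ {v}`,
every maximum-weight `k`-secluded supertree of `F` in `G` contains `u` iff it
contains `v`. -/
theorem leaf_iff_neighbor_in_max [Fintype V] (G : SimpleGraph V) (w : V → ℕ)
    (hw : ∀ x : V, 0 < w x) (k : ℕ) (F : Set V) (hF : F.Nonempty)
    (v u : V) (hvu : G.neighborSet v = {u}) (hFv : F ≠ {v})
    (H : Set V) (hH : H ∈ maxset w (secl G k F)) :
    u ∈ H ↔ v ∈ H := by
  obtain ⟨hHsecl, hmax⟩ := hH
  constructor
  · intro hu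
    by_contra hv
    have hle := hmax _ (insert_mem_secl hHsecl hvu hu)
    unfold weight at hle
    rw [finsum_mem_insert w hv (Set.toFinite H)] at hle
    have := hw v
    omega
  · intro hv
    by_contra hu
    have hnbhd : ∀ y, G.Adj v y → y = u := fun y hy => by
      rwa [← mem_neighborSet, hvu, Set.mem_singleton_iff] at hy
    have hHv : H ⊆ {v} := subset_singleton_of_preconnected_induce
      hHsecl.1.1.connected.preconnected hv fun y hy hvy => hu (hnbhd y hvy ▸ hy)
    exact hFv (hF.subset_singleton_iff.mp (hHsecl.2.trans hHv))

end Secluded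
end

section
/- Let G be a finite simple graph with positive vertex weights w, let k ≥ 0 be an integer, and let F ⊆ V(G) be nonempty. Let v be a degree-1 vertex of G with unique neighbor u, and suppose F ≠ {v}. Define w' on V(G−v) by w'(u) = w(u) + w(v) and w'(x) = w(x) for x ≠ u, and define F' = (F \ {v}) ∪ {u} if v ∈ F and F' = F otherwise. Then secl_G^{k}(F) is nonempty if and only if secl_{G−v}^{k}(F') is nonempty, and in that case the maximum w-weight over secl_G^{k}(F) equals the maximum w'-weight over secl_{G−v}^{k}(F'). -/
/-!
Deleting the leaf `v` from a `k`-secluded supertree of `F` in `G` gives one of `F'` in `G − v`: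
a tree containing `v` and some other vertex of `F` must contain `u`, and since `N(v) = {u}` the
neighbourhood does not grow. Conversely, a secluded tree of `G − v` containing `u` becomes one of
`G` by re-attaching `v`, while one avoiding `u` is already secluded in `G`. Under `w'` the weight
`w v` is carried by `u`, so each direction maps a tree to one of at least the same weight, and the
two maxima coincide.
-/

namespace Secluded

open SimpleGraph

variable {V : Type*}

open SimpleGraph

theorem _root_.SimpleGraph.preconnected_induce_iff_exists_walk {G : SimpleGraph V} {s : Set V} :
    (G.induce s).Preconnected ↔
      ∀ x ∈ s, ∀ y ∈ s, ∃ p : G.Walk x y, ∀ z ∈ p.support, z ∈ s := by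
  refine ⟨fun h x hx y hy => ?_, fun h x y => ?_⟩
  · obtain ⟨p⟩ := h ⟨x, hx⟩ ⟨y, hy⟩
    refine ⟨p.map (Embedding.induce s).toHom, fun z hz => ?_⟩
    obtain ⟨z', -, rfl⟩ := List.mem_map.mp ((p.support_map _) ▸ hz)
    exact z'.2
  · obtain ⟨p, hp⟩ := h x x.2 y y.2
    exact ⟨p.induce s hp⟩

theorem _root_.SimpleGraph.isAcyclic_induce_iff {G : SimpleGraph V} {s : Set V} :
    (G.induce s).IsAcyclic ↔
      ∀ ⦃x : V⦄ (c : G.Walk x x), c.IsCycle → ∃ z ∈ c.support, z ∉ s := by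
  refine ⟨fun h x c hc => ?_, fun h x c hc => ?_⟩
  · by_contra! hcs
    apply h (c.induce s hcs)
    rwa [← Walk.isCycle_map_iff_of_injective (f := (Embedding.induce s).toHom)
      Subtype.val_injective, Walk.map_induce]
  · obtain ⟨z, hz, hzs⟩ := h _ ((Walk.isCycle_map_iff_of_injective (f := (Embedding.induce s).toHom)
      Subtype.val_injective).mpr hc)
    obtain ⟨z', -, rfl⟩ := List.mem_map.mp ((c.support_map _) ▸ hz)
    exact hzs z'.2

variable {G : SimpleGraph V} {s : Set V} {u v : V}

theorem _root_.SimpleGraph.exists_adj_mem_of_preconnected_induce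
    (h : (G.induce s).Preconnected) (hv : v ∈ s) {x : V} (hx : x ∈ s) (hxv : x ≠ v) :
    ∃ y ∈ s, G.Adj v y := by
  obtain ⟨p, hp⟩ := preconnected_induce_iff_exists_walk.mp h v hv x hx
  exact ⟨p.snd, hp _ (p.getVert_mem_support 1), p.adj_snd (Walk.not_nil_of_ne hxv.symm)⟩

theorem _root_.SimpleGraph.Preconnected.induce_sdiff_singleton
    (h : (G.induce s).Preconnected) (hv : (G.neighborSet v).Subsingleton) :
    (G.induce (s \ {v})).Preconnected := by
  classical
  rw [preconnected_induce_iff_exists_walk] at h ⊢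
  intro x hx y hy
  obtain ⟨p, hp⟩ := h x hx.1 y hy.1
  refine ⟨p.toPath, fun z hz => ⟨hp z (p.support_toPath_subset_support hz), ?_⟩⟩
  rintro rfl
  exact p.toPath.2.isTrail.not_mem_support_of_subsingleton_neighborSet
    (fun h => hx.2 h.symm) (fun h => hy.2 h.symm) hv hz

theorem _root_.SimpleGraph.IsAcyclic.induce_insert
    (h : (G.induce s).IsAcyclic) (hv : (G.neighborSet v).Subsingleton) :
    (G.induce (insert v s)).IsAcyclic := by
  classical
  rw [isAcyclic_induce_iff] at h ⊢
  intro x c hc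
  by_cases hvc : v ∈ c.support
  · -- a cycle through `v` meets two distinct neighbours of `v`
    have hc' := hc.rotate hvc
    exact (hc'.snd_ne_penultimate (hv ((c.rotate v hvc).adj_snd hc'.not_nil)
      ((c.rotate v hvc).adj_penultimate hc'.not_nil).symm)).elim
  · obtain ⟨z, hz, hzs⟩ := h c hc
    exact ⟨z, hz, by rintro (rfl | hz'); exacts [hvc hz, hzs hz']⟩

theorem _root_.SimpleGraph.Connected.induce_insert_of_adj
    (h : (G.induce s).Connected) (hu : u ∈ s) (hvu : G.Adj v u) :
    (G.induce (insert v s)).Connected := by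
  have hs : insert v s = {v, u} ∪ s := by
    rw [Set.insert_union, Set.singleton_union, Set.insert_eq_of_mem hu]
  rw [hs]
  exact induce_union_connected (induce_pair_connected_of_adj hvu).preconnected h.preconnected
    ⟨u, by simp, hu⟩

theorem openNbhd_gdelete_singleton (hv : v ∉ s) :
    openNbhd (gdelete G {v}) s = openNbhd G s \ {v} := by
  ext x
  constructor
  · rintro ⟨hxs, y, hys, hxy, hxv, -⟩
    exact ⟨⟨hxs, y, hys, hxy⟩, hxv⟩
  · rintro ⟨⟨hxs, y, hys, hxy⟩, hxv⟩
    exact ⟨hxs, y, hys, hxy, hxv, fun hyv => hv (hyv ▸ hys)⟩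

theorem openNbhd_sdiff_singleton_subset : openNbhd G (s \ {v}) \ {v} ⊆ openNbhd G s := by
  rintro x ⟨⟨hxs, y, hys, hxy⟩, hxv⟩
  exact ⟨fun hx => hxs ⟨hx, hxv⟩, y, hys.1, hxy⟩

theorem openNbhd_insert_of_neighborSet_subset (hv : G.neighborSet v ⊆ s) :
    openNbhd G (insert v s) = openNbhd G s \ {v} := by
  ext x
  constructor
  · rintro ⟨hxvs, y, rfl | hys, hxy⟩
    · exact (hxvs (.inr (hv hxy.symm))).elim
    · exact ⟨⟨fun hx => hxvs (.inr hx), y, hys, hxy⟩, fun hxv => hxvs (.inl hxv)⟩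
  · rintro ⟨⟨hxs, y, hys, hxy⟩, hxv⟩
    exact ⟨by rintro (rfl | hx); exacts [hxv rfl, hxs hx], y, .inr hys, hxy⟩

theorem notMem_openNbhd_of_disjoint (h : Disjoint (G.neighborSet v) s) :
    v ∉ openNbhd G s :=
  fun ⟨_, _, hys, hvy⟩ => h.notMem_of_mem_left hvy hys

theorem gdelete_induce_of_disjoint {D : Set V} (h : Disjoint s D) :
    (gdelete G D).induce s = G.induce s := by
  ext a b
  exact ⟨fun hab => hab.1, fun hab => ⟨hab, h.notMem_of_mem_left a.2, h.notMem_of_mem_left b.2⟩⟩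

theorem isInducedTree_gdelete_iff {D : Set V} (h : Disjoint s D) :
    IsInducedTree (gdelete G D) s ↔ IsInducedTree G s := by
  rw [IsInducedTree, IsInducedTree, gdelete_induce_of_disjoint h]

section SecludedTree

variable {k : ℕ}

theorem IsSecludedTree.sdiff_singleton [Finite V] (hS : IsSecludedTree G k s)
    (hne : (s \ {v}).Nonempty) (hv : (G.neighborSet v).Subsingleton) :
    IsSecludedTree (gdelete G {v}) k (s \ {v}) := by
  obtain ⟨⟨hconn, hac⟩, hk⟩ := hS
  refine ⟨(isInducedTree_gdelete_iff Set.disjoint_sdiff_left).mpr ⟨?_, ?_⟩, ?_⟩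
  · have := hne.to_subtype
    exact ⟨hconn.preconnected.induce_sdiff_singleton hv⟩
  · exact hac.embedding (G.induceHomOfLE Set.sdiff_subset)
  · rw [openNbhd_gdelete_singleton fun h => h.2 rfl]
    exact (Set.ncard_le_ncard openNbhd_sdiff_singleton_subset).trans hk

theorem IsSecludedTree.insert_of_gdelete (hS : IsSecludedTree (gdelete G {v}) k s) (hvs : v ∉ s)
    (hvu : G.neighborSet v = {u}) (hu : u ∈ s) : IsSecludedTree G k (insert v s) := by
  have hdisj := Set.disjoint_singleton_right.mpr hvs
  obtain ⟨⟨hconn, hac⟩, hk⟩ := hS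
  rw [gdelete_induce_of_disjoint hdisj] at hconn hac
  refine ⟨⟨hconn.induce_insert_of_adj hu ?_, hac.induce_insert (hvu ▸ Set.subsingleton_singleton)⟩,
    ?_⟩
  · exact (hvu ▸ rfl : u ∈ G.neighborSet v)
  · rwa [openNbhd_insert_of_neighborSet_subset (hvu ▸ Set.singleton_subset_iff.mpr hu),
      ← openNbhd_gdelete_singleton hvs]

theorem IsSecludedTree.of_gdelete (hS : IsSecludedTree (gdelete G {v}) k s) (hvs : v ∉ s)
    (h : Disjoint (G.neighborSet v) s) : IsSecludedTree G k s := by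
  obtain ⟨htree, hk⟩ := hS
  refine ⟨(isInducedTree_gdelete_iff (Set.disjoint_singleton_right.mpr hvs)).mp htree, ?_⟩
  rwa [openNbhd_gdelete_singleton hvs,
    Set.sdiff_singleton_eq_self (notMem_openNbhd_of_disjoint h)] at hk

end SecludedTree

section Weight

variable [Finite V]

theorem weight_insert (w : V → ℕ) (hvs : v ∉ s) : weight w (insert v s) = weight w s + w v := by
  rw [weight, weight, finsum_mem_insert _ hvs s.toFinite, add_comm]

variable {w w' : V → ℕ} (hw'u : w' u = w u + w v) (hw'x : ∀ x, x ≠ u → w' x = w x)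
include hw'x

omit [Finite V] in
theorem weight_contract_of_not_mem (hu : u ∉ s) : weight w' s = weight w s :=
  finsum_mem_congr rfl fun x hx => hw'x x (ne_of_mem_of_not_mem hx hu)

include hw'u

theorem weight_contract_of_mem (hu : u ∈ s) : weight w' s = weight w s + w v := by
  have hu' : u ∉ s \ {u} := fun h => h.2 rfl
  rw [← Set.insert_sdiff_self_of_mem hu, weight_insert w' hu', weight_insert w hu',
    weight_contract_of_not_mem hw'x hu', hw'u, add_assoc]

theorem weight_le_weight_contract : weight w s ≤ weight w' s := by
  by_cases hu : u ∈ s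
  · exact (weight_contract_of_mem hw'u hw'x hu).symm ▸ Nat.le_add_right _ _
  · exact (weight_contract_of_not_mem hw'x hu).ge

end Weight

theorem csSup_image_le_csSup_image {α β γ : Type*} [ConditionallyCompleteLinearOrderBot γ]
    {A : Set α} {B : Set β} {f : α → γ} {g : β → γ} (hB : BddAbove (g '' B))
    (h : ∀ a ∈ A, ∃ b ∈ B, f a ≤ g b) : sSup (f '' A) ≤ sSup (g '' B) := by
  refine csSup_le' ?_
  rintro _ ⟨a, ha, rfl⟩
  obtain ⟨b, hb, hab⟩ := h a ha
  exact hab.trans (le_csSup hB ⟨b, hb, rfl⟩)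

section Contraction

variable [Finite V] {k : ℕ} {F F' : Set V} {w w' : V → ℕ}
  (hvu : G.neighborSet v = {u}) (hw'u : w' u = w u + w v) (hw'x : ∀ x, x ≠ u → w' x = w x)
  (hF'mem : v ∈ F → F' = (F \ {v}) ∪ {u}) (hF'nmem : v ∉ F → F' = F)
include hvu hw'u hw'x hF'mem hF'nmem

theorem exists_mem_secl_gdelete_weight_ge {f : V} (hfF : f ∈ F) (hfv : f ≠ v) {S : Set V}
    (hS : S ∈ secl G k F) :
    ∃ S' ∈ {S' ∈ secl (gdelete G {v}) k F' | v ∉ S'}, weight w S ≤ weight w' S' := by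
  obtain ⟨hST, hFS⟩ := hS
  have huv : u ≠ v := (G.adj_symm (hvu ▸ rfl : u ∈ G.neighborSet v)).ne
  have huS_of_hvS : v ∈ S → u ∈ S := fun hvS => by
    obtain ⟨y, hy, hvy⟩ :=
      exists_adj_mem_of_preconnected_induce hST.1.1.preconnected hvS (hFS hfF) hfv
    have hyu : y ∈ ({u} : Set V) := hvu ▸ hvy
    exact Set.mem_singleton_iff.mp hyu ▸ hy
  refine ⟨S \ {v}, ⟨⟨hST.sdiff_singleton ⟨f, hFS hfF, hfv⟩ (hvu ▸ Set.subsingleton_singleton),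
    ?_⟩, fun h => h.2 rfl⟩, ?_⟩
  · by_cases hvF : v ∈ F
    · rw [hF'mem hvF]
      rintro x (hx | rfl)
      exacts [⟨hFS hx.1, hx.2⟩, ⟨huS_of_hvS (hFS hvF), huv⟩]
    · rw [hF'nmem hvF]
      exact fun x hx => ⟨hFS hx, fun hxv => hvF (hxv ▸ hx)⟩
  · by_cases hvS : v ∈ S
    · have hvS' : v ∉ S \ {v} := fun h => h.2 rfl
      have huS : u ∈ S \ {v} := ⟨huS_of_hvS hvS, huv⟩
      rw [weight_contract_of_mem hw'u hw'x huS, ← weight_insert w hvS',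
        Set.insert_sdiff_self_of_mem hvS]
    · rw [Set.sdiff_singleton_eq_self hvS]
      exact weight_le_weight_contract hw'u hw'x

theorem exists_mem_secl_weight_ge {S' : Set V}
    (hS' : S' ∈ {S' ∈ secl (gdelete G {v}) k F' | v ∉ S'}) :
    ∃ S ∈ secl G k F, weight w' S' ≤ weight w S := by
  obtain ⟨⟨hST, hF'S⟩, hvS⟩ := hS'
  by_cases hu : u ∈ S'
  · have hFS : F \ {v} ⊆ S' := by
      by_cases hvF : v ∈ F
      · exact (hF'mem hvF ▸ Set.subset_union_left).trans hF'S
      · exact (Set.sdiff_subset.trans (hF'nmem hvF).ge).trans hF'S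
    refine ⟨insert v S', ⟨hST.insert_of_gdelete hvS hvu hu, ?_⟩, ?_⟩
    · exact Set.insert_eq v S' ▸ Set.sdiff_subset_iff.mp hFS
    · rw [weight_contract_of_mem hw'u hw'x hu, weight_insert w hvS]
  · have hvF : v ∉ F := fun hvF => hu (hF'S (hF'mem hvF ▸ .inr rfl))
    refine ⟨S', ⟨hST.of_gdelete hvS (hvu ▸ Set.disjoint_singleton_left.mpr hu),
      hF'nmem hvF ▸ hF'S⟩, (weight_contract_of_not_mem hw'x hu).le⟩

end Contraction

theorem contract_leaf_weight_general [Fintype V] (G : SimpleGraph V) (w : V → ℕ)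
    (k : ℕ) (F : Set V) (hF : F.Nonempty)
    (v u : V) (hvu : G.neighborSet v = {u}) (hFv : F ≠ {v})
    (w' : V → ℕ) (hw'u : w' u = w u + w v) (hw'x : ∀ x : V, x ≠ u → w' x = w x)
    (F' : Set V) (hF'mem : v ∈ F → F' = (F \ {v}) ∪ {u}) (hF'nmem : v ∉ F → F' = F) :
    ((secl G k F).Nonempty ↔ {S ∈ secl (gdelete G {v}) k F' | v ∉ S}.Nonempty) ∧
      ((secl G k F).Nonempty →
        sSup (weight w '' secl G k F) =
          sSup (weight w' '' {S ∈ secl (gdelete G {v}) k F' | v ∉ S})) := by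
  obtain ⟨f, hfF, hfv⟩ : ∃ f ∈ F, f ≠ v := by
    by_contra! h
    exact hFv (Set.eq_singleton_iff_nonempty_unique_mem.mpr ⟨hF, h⟩)
  have prune := fun S =>
    exists_mem_secl_gdelete_weight_ge (k := k) (S := S) hvu hw'u hw'x hF'mem hF'nmem hfF hfv
  have graft := fun S' =>
    exists_mem_secl_weight_ge (k := k) (S' := S') hvu hw'u hw'x hF'mem hF'nmem
  refine ⟨⟨fun ⟨S, hS⟩ => ?_, fun ⟨S', hS'⟩ => ?_⟩, fun _ => le_antisymm ?_ ?_⟩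
  · obtain ⟨S', hS', -⟩ := prune S hS
    exact ⟨S', hS'⟩
  · obtain ⟨S, hS, -⟩ := graft S' hS'
    exact ⟨S, hS⟩
  · exact csSup_image_le_csSup_image (Set.toFinite _).bddAbove prune
  · exact csSup_image_le_csSup_image (Set.toFinite _).bddAbove graft

/-- contracting a degree-1 vertex `v` (with unique neighbor `u`,
`F ≠ {v}`) preserves existence of `k`-secluded supertrees and the maximum weight:
`secl_G^k(F)` is nonempty iff `secl_{G−v}^k(F')` is, and in that case the maximum
`w`-weight over the former equals the maximum `w'`-weight over the latter. -/
theorem contract_leaf_weight [Fintype V] (G : SimpleGraph V) (w : V → ℕ)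
    (hw : ∀ x : V, 0 < w x) (k : ℕ) (F : Set V) (hF : F.Nonempty)
    (v u : V) (hvu : G.neighborSet v = {u}) (hFv : F ≠ {v})
    (w' : V → ℕ) (hw'u : w' u = w u + w v) (hw'x : ∀ x : V, x ≠ u → w' x = w x)
    (F' : Set V) (hF'mem : v ∈ F → F' = (F \ {v}) ∪ {u}) (hF'nmem : v ∉ F → F' = F) :
    ((secl G k F).Nonempty ↔ {S ∈ secl (gdelete G {v}) k F' | v ∉ S}.Nonempty) ∧
      ((secl G k F).Nonempty →
        sSup (weight w '' secl G k F) =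
          sSup (weight w' '' {S ∈ secl (gdelete G {v}) k F' | v ∉ S})) :=
  contract_leaf_weight_general G w k F hF v u hvu hFv w' hw'u hw'x F' hF'mem hF'nmem

end Secluded
end
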